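/- arXiv:2302.08755 — 4 statements merged into one kernel-verified Lean document; each statement's English description precedes it below -/
import Mathlib

section
/- Let {P_t}_{t∈T} be a Markov semigroup on a Polish space (X, ρ) with T = ℕ₊. If {P_t} is Feller and satisfies the eventual e-property at every point z ∈ X, then {P_t} satisfies the e-property at every point z ∈ X. -/
open MeasureTheory Filter Topology Metric ENNReal
open scoped Classical

noncomputable section

variable {X : Type*}

/-- A bounded Lipschitz real-valued function. -/
def BddLip [PseudoMetricSpace X] (f : X → ℝ) : Prop :=
  (∃ K, LipschitzWith K f) ∧ ∃ C, ∀ x, |f x| ≤ C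

/-- The topological support of a Borel measure:
`{x : μ(B(x,ε)) > 0 for every ε > 0}`. -/
def msupp [PseudoMetricSpace X] [MeasurableSpace X] (μ : Measure X) : Set X :=
  {x | ∀ ε > 0, 0 < μ (Metric.ball x ε)}

/-! ### Discrete time `T = ℕ₊` -/

/-- Action of a transition kernel family on bounded Borel functions:
`P_n f (x) = ∫ f(y) P_n(x,dy)`. -/
def PfN [MeasurableSpace X] (P : ℕ → X → Measure X) (n : ℕ) (f : X → ℝ) (x : X) : ℝ :=
  ∫ y, f y ∂ P n x

/-- A Markov semigroup indexed by `T = ℕ₊ = {1,2,...}`. -/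
def IsMarkovSemigroupN [MeasurableSpace X] (P : ℕ → X → Measure X) : Prop :=
  (∀ n x, 1 ≤ n → IsProbabilityMeasure (P n x)) ∧
  (∀ (n : ℕ) (A : Set X), 1 ≤ n → MeasurableSet A → Measurable fun x => P n x A) ∧
  ∀ (m n : ℕ) (x : X) (A : Set X), 1 ≤ m → 1 ≤ n → MeasurableSet A →
    P (m + n) x A = ∫⁻ y, P n y A ∂ P m x

/-- The Feller property: each `P_n` maps bounded continuous functions to
bounded continuous functions. -/
def FellerN [MeasurableSpace X] [PseudoMetricSpace X] (P : ℕ → X → Measure X) : Prop :=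
  ∀ n, 1 ≤ n → ∀ f : X → ℝ, Continuous f → (∃ C, ∀ x, |f x| ≤ C) →
    Continuous (fun x => PfN P n f x) ∧ ∃ C, ∀ x, |PfN P n f x| ≤ C

/-- The e-property at a point `z`. -/
def EPropN [MeasurableSpace X] [PseudoMetricSpace X] (P : ℕ → X → Measure X) (z : X) : Prop :=
  ∀ f : X → ℝ, BddLip f → ∀ ε > 0, ∃ δ > 0, ∀ x, dist x z < δ → ∀ n, 1 ≤ n →
    |PfN P n f x - PfN P n f z| < ε

/-- The eventual e-property at a point `z`. -/
def EventualEPropN [MeasurableSpace X] [PseudoMetricSpace X] (P : ℕ → X → Measure X)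
    (z : X) : Prop :=
  ∀ f : X → ℝ, BddLip f → ∀ ε > 0, ∃ δ > 0, ∃ n₀ : ℕ, 1 ≤ n₀ ∧
    ∀ x, dist x z < δ → ∀ n, n₀ ≤ n → |PfN P n f x - PfN P n f z| < ε

/-- Eventual continuity (asymptotic equicontinuity) at a point `z`. -/
def EvContN [MeasurableSpace X] [PseudoMetricSpace X] (P : ℕ → X → Measure X) (z : X) : Prop :=
  ∀ f : X → ℝ, BddLip f → ∀ ε > 0, ∃ δ > 0, ∀ x, dist x z < δ →
    Filter.limsup (fun n => |PfN P n f x - PfN P n f z|) Filter.atTop ≤ ε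

/-- Invariance of a measure: `P_n μ = μ` for all `n ∈ ℕ₊`. -/
def InvariantN [MeasurableSpace X] (P : ℕ → X → Measure X) (μ : Measure X) : Prop :=
  ∀ n, 1 ≤ n → μ.bind (P n) = μ

/-- `μ` is an ergodic invariant measure: it is invariant and every Borel set `A`
with `P_n 1_A = 1_A` μ-a.e. for all `n` has `μ(A) ∈ {0,1}`. -/
def ErgodicMeasN [MeasurableSpace X] (P : ℕ → X → Measure X) (μ : Measure X) : Prop :=
  InvariantN P μ ∧
  ∀ A : Set X, MeasurableSet A →
    (∀ n, 1 ≤ n → ∀ᵐ x ∂μ, P n x A = A.indicator (fun _ => (1 : ℝ≥0∞)) x) →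
    μ A = 0 ∨ μ A = 1

/-- Cesàro averages acting on functions: `Q_n f(x) = (1/n) ∑_{k=1}^n P_k f(x)`. -/
def QfN [MeasurableSpace X] (P : ℕ → X → Measure X) (n : ℕ) (f : X → ℝ) (x : X) : ℝ :=
  (1 / (n : ℝ)) * ∑ k ∈ Finset.Icc 1 n, PfN P k f x

/-- Cesàro averages on sets: `Q_n(x,A) = (1/n) ∑_{k=1}^n P_k(x,A)`. -/
def QsetN [MeasurableSpace X] (P : ℕ → X → Measure X) (n : ℕ) (x : X) (A : Set X) : ℝ≥0∞ :=
  (n : ℝ≥0∞)⁻¹ * ∑ k ∈ Finset.Icc 1 n, P k x A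

/-- Asymptotic stability with unique invariant measure `μs`. -/
def AsympStableN [MeasurableSpace X] [PseudoMetricSpace X] (P : ℕ → X → Measure X)
    (μs : Measure X) : Prop :=
  IsProbabilityMeasure μs ∧ InvariantN P μs ∧
  (∀ ν : Measure X, IsProbabilityMeasure ν → InvariantN P ν → ν = μs) ∧
  ∀ ν : Measure X, IsProbabilityMeasure ν → ∀ f : X → ℝ, Continuous f →
    (∃ C, ∀ x, |f x| ≤ C) →
    Tendsto (fun n => ∫ y, f y ∂ (ν.bind (P n))) atTop (𝓝 (∫ y, f y ∂ μs))

/-! ### Continuous time `T = [0,∞)` -/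

/-- Action on bounded Borel functions, continuous time. -/
def PfR [MeasurableSpace X] (P : ℝ → X → Measure X) (t : ℝ) (f : X → ℝ) (x : X) : ℝ :=
  ∫ y, f y ∂ P t x

/-- A Markov semigroup indexed by `T = [0,∞)`, with `P_0(x,·) = δ_x`. -/
def IsMarkovSemigroupR [MeasurableSpace X] (P : ℝ → X → Measure X) : Prop :=
  (∀ t x, 0 ≤ t → IsProbabilityMeasure (P t x)) ∧
  (∀ (t : ℝ) (A : Set X), 0 ≤ t → MeasurableSet A → Measurable fun x => P t x A) ∧
  (∀ x, P 0 x = Measure.dirac x) ∧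
  ∀ (s t : ℝ) (x : X) (A : Set X), 0 ≤ s → 0 ≤ t → MeasurableSet A →
    P (s + t) x A = ∫⁻ y, P t y A ∂ P s x

/-- Joint time-measurability: `s ↦ P_s(x,A)` is Borel measurable. -/
def TimeMeasR [MeasurableSpace X] (P : ℝ → X → Measure X) : Prop :=
  ∀ (x : X) (A : Set X), MeasurableSet A → Measurable fun s : ℝ => P s x A

/-- The Feller property, continuous time. -/
def FellerR [MeasurableSpace X] [PseudoMetricSpace X] (P : ℝ → X → Measure X) : Prop :=
  ∀ t : ℝ, 0 ≤ t → ∀ f : X → ℝ, Continuous f → (∃ C, ∀ x, |f x| ≤ C) →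
    Continuous (fun x => PfR P t f x) ∧ ∃ C, ∀ x, |PfR P t f x| ≤ C

/-- Strong continuity on `C_b(X)`: `sup_x |P_t f(x) - f(x)| → 0` as `t ↓ 0`. -/
def StrongContR [MeasurableSpace X] [PseudoMetricSpace X] (P : ℝ → X → Measure X) : Prop :=
  ∀ f : X → ℝ, Continuous f → (∃ C, ∀ x, |f x| ≤ C) →
    ∀ ε > 0, ∃ η > 0, ∀ t : ℝ, 0 < t → t < η → ∀ x, |PfR P t f x - f x| < ε

/-- The e-property at a point `z`, continuous time. -/
def EPropR [MeasurableSpace X] [PseudoMetricSpace X] (P : ℝ → X → Measure X) (z : X) : Prop :=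
  ∀ f : X → ℝ, BddLip f → ∀ ε > 0, ∃ δ > 0, ∀ x, dist x z < δ → ∀ t : ℝ, 0 ≤ t →
    |PfR P t f x - PfR P t f z| < ε

/-- The eventual e-property at a point `z`, continuous time. -/
def EventualEPropR [MeasurableSpace X] [PseudoMetricSpace X] (P : ℝ → X → Measure X)
    (z : X) : Prop :=
  ∀ f : X → ℝ, BddLip f → ∀ ε > 0, ∃ δ > 0, ∃ t₀ : ℝ, 0 ≤ t₀ ∧
    ∀ x, dist x z < δ → ∀ t : ℝ, t₀ ≤ t → |PfR P t f x - PfR P t f z| < ε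

/-- Eventual continuity at `z`, continuous time. -/
def EvContR [MeasurableSpace X] [PseudoMetricSpace X] (P : ℝ → X → Measure X) (z : X) : Prop :=
  ∀ f : X → ℝ, BddLip f → ∀ ε > 0, ∃ δ > 0, ∀ x, dist x z < δ →
    Filter.limsup (fun t : ℝ => |PfR P t f x - PfR P t f z|) Filter.atTop ≤ ε

/-- Invariance, continuous time. -/
def InvariantR [MeasurableSpace X] (P : ℝ → X → Measure X) (μ : Measure X) : Prop :=
  ∀ t : ℝ, 0 ≤ t → μ.bind (P t) = μ

/-- Ergodic invariant measure, continuous time. -/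
def ErgodicMeasR [MeasurableSpace X] (P : ℝ → X → Measure X) (μ : Measure X) : Prop :=
  InvariantR P μ ∧
  ∀ A : Set X, MeasurableSet A →
    (∀ t : ℝ, 0 ≤ t → ∀ᵐ x ∂μ, P t x A = A.indicator (fun _ => (1 : ℝ≥0∞)) x) →
    μ A = 0 ∨ μ A = 1

/-- Cesàro averages acting on functions: `Q_t f(x) = (1/t) ∫_0^t P_s f(x) ds`. -/
def QfR [MeasurableSpace X] (P : ℝ → X → Measure X) (t : ℝ) (f : X → ℝ) (x : X) : ℝ :=
  (1 / t) * ∫ s in Set.Ioc (0 : ℝ) t, PfR P s f x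

/-- Cesàro averages on sets: `Q_t(x,A) = (1/t) ∫_0^t P_s(x,A) ds`. -/
def QsetR [MeasurableSpace X] (P : ℝ → X → Measure X) (t : ℝ) (x : X) (A : Set X) : ℝ≥0∞ :=
  ENNReal.ofReal (1 / t) * ∫⁻ s in Set.Ioc (0 : ℝ) t, P s x A

/-- Asymptotic stability, continuous time. -/
def AsympStableR [MeasurableSpace X] [PseudoMetricSpace X] (P : ℝ → X → Measure X)
    (μs : Measure X) : Prop :=
  IsProbabilityMeasure μs ∧ InvariantR P μs ∧
  (∀ ν : Measure X, IsProbabilityMeasure ν → InvariantR P ν → ν = μs) ∧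
  ∀ ν : Measure X, IsProbabilityMeasure ν → ∀ f : X → ℝ, Continuous f →
    (∃ C, ∀ x, |f x| ≤ C) →
    Tendsto (fun t : ℝ => ∫ y, f y ∂ (ν.bind (P t))) atTop (𝓝 (∫ y, f y ∂ μs))

end
/-- Auxiliary: a finite family of "eventually small radius" conditions admits a common
positive radius. -/
lemma finset_delta {α : Type*} (S : Finset α) (p : α → ℝ → Prop)
    (hmono : ∀ a δ δ', δ' ≤ δ → p a δ → p a δ')
    (h : ∀ a ∈ S, ∃ δ > 0, p a δ) : ∃ δ > 0, ∀ a ∈ S, p a δ := by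
  classical
  induction S using Finset.induction_on with
  | empty => exact ⟨1, one_pos, by simp⟩
  | @insert a S ha ih =>
    obtain ⟨δ₁, hδ₁, hp₁⟩ := h a (Finset.mem_insert_self a S)
    obtain ⟨δ₂, hδ₂, hp₂⟩ := ih fun b hb => h b (Finset.mem_insert_of_mem hb)
    refine ⟨min δ₁ δ₂, lt_min hδ₁ hδ₂, ?_⟩
    intro b hb
    rcases Finset.mem_insert.mp hb with rfl | hb
    · exact hmono b δ₁ _ (min_le_left _ _) hp₁
    · exact hmono b δ₂ _ (min_le_right _ _) (hp₂ b hb)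


/-- For `T = ℕ₊`, if a Markov semigroup on a Polish space is Feller and
satisfies the eventual e-property at every point, then it satisfies the e-property at
every point. -/
theorem stmt1 {X : Type*} [MetricSpace X] [CompleteSpace X]
    [TopologicalSpace.SeparableSpace X] [MeasurableSpace X] [BorelSpace X]
    (P : ℕ → X → Measure X) (hP : IsMarkovSemigroupN P) (hFeller : FellerN P)
    (he : ∀ z : X, EventualEPropN P z) :
    ∀ z : X, EPropN P z := by
  intro z f hf ε hε
  obtain ⟨δ₀, hδ₀, n₀, hn₀, hEv⟩ := he z f hf ε hε
  obtain ⟨⟨K, hK⟩, C, hC⟩ := hf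
  have hcont : ∀ n, 1 ≤ n → ContinuousAt (fun x => PfN P n f x) z := fun n hn =>
    ((hFeller n hn f hK.continuous ⟨C, hC⟩).1).continuousAt
  have hfin : ∃ δ > 0, ∀ n ∈ Finset.Ico 1 n₀,
      ∀ x, dist x z < δ → |PfN P n f x - PfN P n f z| < ε := by
    apply finset_delta
    · intro n δ δ' hle hp x hx
      exact hp x (lt_of_lt_of_le hx hle)
    · intro n hn
      obtain ⟨δ, hδ, h⟩ := Metric.continuousAt_iff.mp
        (hcont n (Finset.mem_Ico.mp hn).1) ε hε
      exact ⟨δ, hδ, fun x hx => by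
        have := h hx
        rwa [Real.dist_eq] at this⟩
  obtain ⟨δ₁, hδ₁, hFin⟩ := hfin
  refine ⟨min δ₀ δ₁, lt_min hδ₀ hδ₁, ?_⟩
  intro x hx n hn
  rcases lt_or_ge n n₀ with h | h
  · exact hFin n (Finset.mem_Ico.mpr ⟨hn, h⟩) x (hx.trans_le (min_le_right _ _))
  · exact hEv x (hx.trans_le (min_le_left _ _)) n h
end

section
/- Let {P_t}_{t∈T} be a Markov semigroup on a Polish space (X, ρ) with T = [0,∞) which is Feller and strongly continuous on C_b(X). If {P_t} satisfies the eventual e-property at every point z ∈ X, then {P_t} satisfies the e-property at every point z ∈ X. -/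
open MeasureTheory Filter Topology Metric ENNReal
open scoped Classical

/-!
For `t` beyond the time `t₀` supplied by the eventual e-property there is nothing to prove. On
`[0, t₀]`, strong continuity gives `η > 0` with `sup |P_u f - f| ≤ ε/3` for `u < η`, and since each
`P_s` is a contraction, `sup |P_{s+u} f - P_s f| ≤ ε/3` uniformly in `s`. Every `t ≤ t₀` is within
`η` of one of the finitely many grid times `kη ≤ t₀`, at which the Feller property gives continuity
at `z`; a single `δ` therefore works for all `t ∈ [0, t₀]`.
-/

namespace IsMarkovSemigroupR

variable {X : Type*} [MeasurableSpace X] {P : ℝ → X → Measure X}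

lemma measurable (hP : IsMarkovSemigroupR P) {t : ℝ} (ht : 0 ≤ t) : Measurable (P t) :=
  Measure.measurable_of_measurable_coe _ fun _ hA => hP.2.1 t _ ht hA

lemma eq_bind (hP : IsMarkovSemigroupR P) {s t : ℝ} (hs : 0 ≤ s) (ht : 0 ≤ t) (x : X) :
    P (s + t) x = (P s x).bind (P t) :=
  Measure.ext fun A hA => by
    rw [Measure.bind_apply hA (hP.measurable ht).aemeasurable]
    exact hP.2.2.2 s t x A hs ht hA

lemma pfR_zero (hP : IsMarkovSemigroupR P) {f : X → ℝ} (hf : Measurable f) (x : X) :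
    PfR P 0 f x = f x := by
  rw [PfR, hP.2.2.1, integral_dirac' _ _ hf.stronglyMeasurable]

lemma abs_pfR_le (hP : IsMarkovSemigroupR P) {t : ℝ} (ht : 0 ≤ t) {g : X → ℝ} {c : ℝ}
    (hg : ∀ y, |g y| ≤ c) (x : X) : |PfR P t g x| ≤ c := by
  have := hP.1 t x ht
  simpa [PfR] using norm_integral_le_of_norm_le_const (μ := P t x) (f := g) (ae_of_all _ hg)

lemma integrable (hP : IsMarkovSemigroupR P) {t : ℝ} (ht : 0 ≤ t) {g : X → ℝ}
    (hg : Measurable g) {c : ℝ} (hgc : ∀ y, |g y| ≤ c) (x : X) : Integrable g (P t x) :=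
  have := hP.1 t x ht
  .of_bound hg.aestronglyMeasurable c (ae_of_all _ hgc)

lemma measurable_pfR (hP : IsMarkovSemigroupR P) {t : ℝ} (ht : 0 ≤ t) {g : X → ℝ}
    (hg : Measurable g) : Measurable (PfR P t g) :=
  (hg.stronglyMeasurable.integral_kernel (κ := ⟨P t, hP.measurable ht⟩)).measurable

lemma pfR_add (hP : IsMarkovSemigroupR P) {s t : ℝ} (hs : 0 ≤ s) (ht : 0 ≤ t) {g : X → ℝ}
    (hg : Measurable g) {c : ℝ} (hgc : ∀ y, |g y| ≤ c) (x : X) :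
    PfR P (s + t) g x = PfR P s (PfR P t g) x := by
  have hcomp := ProbabilityTheory.Kernel.integral_comp (η := ⟨P t, hP.measurable ht⟩)
    (κ := ⟨P s, hP.measurable hs⟩) (a := x) (f := g)
  simp only [ProbabilityTheory.Kernel.comp_apply, ProbabilityTheory.Kernel.coe_mk,
    ← hP.eq_bind hs ht] at hcomp
  exact hcomp (hP.integrable (add_nonneg hs ht) hg hgc x)

lemma abs_pfR_add_sub_le (hP : IsMarkovSemigroupR P) {s u : ℝ} (hs : 0 ≤ s) (hu : 0 ≤ u)
    {f : X → ℝ} (hf : Measurable f) {C : ℝ} (hC : ∀ y, |f y| ≤ C) {c : ℝ}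
    (hc : ∀ y, |PfR P u f y - f y| ≤ c) (x : X) :
    |PfR P (s + u) f x - PfR P s f x| ≤ c := by
  rw [hP.pfR_add hs hu hf hC, PfR, PfR, ← integral_sub
    (hP.integrable hs (hP.measurable_pfR hu hf) (hP.abs_pfR_le hu hC) x)
    (hP.integrable hs hf hC x)]
  exact hP.abs_pfR_le hs hc x

end IsMarkovSemigroupR

lemma exists_abs_sub_lt_of_abs_add_sub_le {X : Type*} [PseudoMetricSpace X] {F : ℝ → X → ℝ}
    {z : X} {η ε : ℝ} (hη : 0 < η) (hε : 0 < ε) (hcont : ∀ t, 0 ≤ t → ContinuousAt (F t) z)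
    (hstep : ∀ s u w, 0 ≤ s → 0 ≤ u → u < η → |F (s + u) w - F s w| ≤ ε) (T : ℝ) :
    ∃ δ > 0, ∀ x, dist x z < δ → ∀ t, 0 ≤ t → t ≤ T → |F t x - F t z| < 3 * ε := by
  have hgrid : ∀ᶠ x in 𝓝 z, ∀ k ∈ Finset.range (⌈T / η⌉₊ + 1),
      |F (k * η) x - F (k * η) z| < ε :=
    (eventually_all_finset _).2 fun k _ => by
      simpa only [Real.dist_eq] using
        Metric.tendsto_nhds.1 (hcont (k * η) (by positivity)) ε hε
  obtain ⟨δ, hδ, hnear⟩ := Metric.eventually_nhds_iff.1 hgrid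
  refine ⟨δ, hδ, fun x hx t ht htT => ?_⟩
  set k := ⌊t / η⌋₊
  have hk : k ∈ Finset.range (⌈T / η⌉₊ + 1) := Finset.mem_range_succ_iff.2 <|
    (Nat.floor_le_floor (div_le_div_of_nonneg_right htT hη.le)).trans (Nat.floor_le_ceil _)
  have hkt : k * η ≤ t := (le_div_iff₀ hη).1 (Nat.floor_le (div_nonneg ht hη.le))
  have htk : t - k * η < η := by
    have := (div_lt_iff₀ hη).1 (Nat.lt_floor_add_one (t / η))
    linarith
  have hstep' : ∀ w, |F t w - F (k * η) w| ≤ ε := fun w => by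
    simpa using hstep (k * η) (t - k * η) w (by positivity) (by linarith) htk
  have hx' := hstep' x
  have hz' := hstep' z
  have hk' := hnear hx k hk
  rw [abs_le] at hx' hz'
  rw [abs_lt] at hk' ⊢
  constructor <;> linarith

theorem stmt2_general {X : Type*} [MetricSpace X] [MeasurableSpace X] [BorelSpace X]
    (P : ℝ → X → Measure X) (hP : IsMarkovSemigroupR P) (hFeller : FellerR P)
    (hsc : StrongContR P) (he : ∀ z : X, EventualEPropR P z) :
    ∀ z : X, EPropR P z := by
  intro z f hf ε hε
  obtain ⟨⟨K, hLip⟩, C, hC⟩ := hf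
  have hfc : Continuous f := hLip.continuous
  obtain ⟨η, hη, hsmall⟩ := hsc f hfc ⟨C, hC⟩ (ε / 3) (by positivity)
  have hstep : ∀ s u w, 0 ≤ s → 0 ≤ u → u < η → |PfR P (s + u) f w - PfR P s f w| ≤ ε / 3 := by
    intro s u w hs hu huη
    refine hP.abs_pfR_add_sub_le hs hu hfc.measurable hC (fun y => ?_) w
    rcases hu.eq_or_lt with rfl | hu
    · simp only [hP.pfR_zero hfc.measurable, sub_self, abs_zero]
      positivity
    · exact (hsmall u hu huη y).le
  obtain ⟨δ₁, hδ₁, t₀, -, hlate⟩ := he z f ⟨⟨K, hLip⟩, C, hC⟩ ε hε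
  obtain ⟨δ₂, hδ₂, hearly⟩ := exists_abs_sub_lt_of_abs_add_sub_le hη (by positivity)
    (fun t ht => (hFeller t ht f hfc ⟨C, hC⟩).1.continuousAt) hstep t₀
  refine ⟨min δ₁ δ₂, lt_min hδ₁ hδ₂, fun x hx t ht => ?_⟩
  rcases le_or_gt t₀ t with h | h
  · exact hlate x (hx.trans_le (min_le_left _ _)) t h
  · linarith [hearly x (hx.trans_le (min_le_right _ _)) t ht h.le]

/-- For `T = [0,∞)`, if a Markov semigroup on a Polish space is Feller,
strongly continuous on `C_b(X)`, and satisfies the eventual e-property at every point,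
then it satisfies the e-property at every point. -/
theorem stmt2 {X : Type*} [MetricSpace X] [CompleteSpace X]
    [TopologicalSpace.SeparableSpace X] [MeasurableSpace X] [BorelSpace X]
    (P : ℝ → X → Measure X) (hP : IsMarkovSemigroupR P) (hFeller : FellerR P)
    (hsc : StrongContR P) (he : ∀ z : X, EventualEPropR P z) :
    ∀ z : X, EPropR P z :=
  stmt2_general P hP hFeller hsc he
end

section
/- Let {P_t}_{t∈T} be a Markov semigroup on a Polish space (X, ρ) (T = ℕ₊ or T = [0,∞)) which is Feller, let μ be an ergodic invariant Borel probability measure for {P_t} with Int(supp μ) ≠ ∅, and let x₀ ∈ X. Suppose that for every bounded Lipschitz f : X → ℝ and every ε > 0 there exist an open ball B ⊆ supp μ, N ∈ T and α > 0 such that: (i) |P_t f(x) − P_t f(x₀)| ≤ ε for all x ∈ B and all t ∈ T with t ≥ N; and (ii) for every Borel probability measure ν on X there exists t_ν ∈ T with (P_{t_ν} ν)(B) > α. Then {P_t} satisfies the eventual e-property at x₀. -/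
open MeasureTheory Filter Topology Metric ENNReal
open scoped Classical

universe u

/-!
Fix `f`, `ε`, and the ball `B`, time `N` and mass `α` provided for `ε`. Starting from the
point masses `δ_x`, the laws of the chain started at points `x` near `x₀` are matched in rounds.
If after some rounds a remainder of mass `m`, depending weakly continuously on `x`, is left
unmatched, condition (ii) for the normalised remainder at `x₀` gives a time `s` after which
it puts mass `> α m` on `B`. Inner regularity and Urysohn's lemma turn this into a continuous
bump `h ≤ 1_B` with `∫ h > α m` at `x₀`, hence, by the Feller property, on a neighbourhood of
`x₀`. Removing the part `(α m / ∫ h) h` of the remainder at every such `x` leaves mass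
`(1 - α) m`, and by (i) the removed parts contribute `α m P_u f(x₀)` to `P_u f(x)` up to
`ε α m`, whatever `x` is. After `k` rounds, `|P_t f(x) - P_t f(x₀)| ≤ 2ε + 2 sup |f| (1 - α)^k`
for all large `t`.
-/
open Set ProbabilityTheory

theorem abs_le_one_of_mem_Icc {a : ℝ} (ha : a ∈ Icc 0 1) : |a| ≤ 1 :=
  abs_le.2 ⟨by linarith [ha.1], ha.2⟩

theorem abs_mul_le_of_mem_Icc {a b C : ℝ} (ha : a ∈ Icc 0 1) (hb : |b| ≤ C) : |a * b| ≤ C := by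
  rw [abs_mul]; exact (mul_le_of_le_one_left (abs_nonneg _) (abs_le_one_of_mem_Icc ha)).trans hb

section MeasureLemmas

variable {X : Type*} [MeasurableSpace X]

theorem integrable_of_abs_le {μ : Measure X} [IsFiniteMeasure μ] {g : X → ℝ}
    (hg : Measurable g) {C : ℝ} (hgC : ∀ y, |g y| ≤ C) : Integrable g μ :=
  .of_bound hg.aestronglyMeasurable C (ae_of_all _ hgC)

theorem abs_integral_le_of_abs_le {μ : Measure X} [IsFiniteMeasure μ] {g : X → ℝ} {C : ℝ}
    (hgC : ∀ y, |g y| ≤ C) : |∫ y, g y ∂μ| ≤ C * μ.real univ :=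
  norm_integral_le_of_norm_le_const (μ := μ) (f := g) (ae_of_all _ hgC)

theorem exists_lt_bind_apply_mul {T : Type*} {P : T → X → Measure X}
    {p : T → Prop} {B : Set X} {α : ℝ}
    (hB : ∀ ν : Measure X, IsProbabilityMeasure ν → ∃ s, p s ∧ ENNReal.ofReal α < ν.bind (P s) B)
    (ρ : Measure X) [IsFiniteMeasure ρ] [NeZero ρ] :
    ∃ s, p s ∧ ENNReal.ofReal α * ρ univ < ρ.bind (P s) B := by
  obtain ⟨s, hs, hsB⟩ := hB _ (isProbabilityMeasureSMul (μ := ρ))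
  refine ⟨s, hs, ?_⟩
  rwa [Measure.bind_smul, Measure.smul_apply, smul_eq_mul, ← ENNReal.div_eq_inv_mul,
    ENNReal.lt_div_iff_mul_lt (.inl (NeZero.ne _)) (.inl (measure_ne_top ρ univ))] at hsB

theorem eq_bind_of_forall_apply {μ ρ : Measure X} {κ : X → Measure X} (hκ : Measurable κ)
    (h : ∀ A, MeasurableSet A → μ A = ∫⁻ y, κ y A ∂ρ) : μ = ρ.bind κ :=
  Measure.ext fun A hA => by rw [Measure.bind_apply hA hκ.aemeasurable, h A hA]

variable {κ : X → Measure X}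

theorem Measurable.integral_measure {g : X → ℝ} (hg : Measurable g) (hκ : Measurable κ) :
    Measurable fun x => ∫ y, g y ∂κ x :=
  (hg.stronglyMeasurable.integral_kernel (κ := ⟨κ, hκ⟩)).measurable

section Markov

variable (hκ : Measurable κ) [hκ₁ : ∀ x, IsProbabilityMeasure (κ x)] (ρ : Measure X)
include hκ hκ₁

theorem isMarkovKernel_mk : IsMarkovKernel (⟨κ, hκ⟩ : Kernel X X) := ⟨hκ₁⟩

theorem isFiniteMeasure_bind [IsFiniteMeasure ρ] : IsFiniteMeasure (ρ.bind κ) :=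
  have := isMarkovKernel_mk hκ
  inferInstanceAs (IsFiniteMeasure ((⟨κ, hκ⟩ : Kernel X X) ∘ₘ ρ))

theorem measureReal_bind_univ : (ρ.bind κ).real univ = ρ.real univ :=
  have := isMarkovKernel_mk hκ
  congrArg ENNReal.toReal (Measure.comp_apply_univ (κ := ⟨κ, hκ⟩))

theorem integral_bind_of_abs_le [IsFiniteMeasure ρ] {g : X → ℝ} (hg : Measurable g) {C : ℝ}
    (hgC : ∀ y, |g y| ≤ C) : ∫ y, g y ∂ρ.bind κ = ∫ x, ∫ y, g y ∂κ x ∂ρ := by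
  have := isMarkovKernel_mk hκ
  have := isFiniteMeasure_bind hκ ρ
  change ∫ y, g y ∂((⟨κ, hκ⟩ : Kernel X X) ∘ₘ ρ) = _
  rw [Measure.comp_eq_comp_const_apply, Kernel.integral_comp (integrable_of_abs_le hg hgC)]
  rfl

end Markov

end MeasureLemmas

section Bump

variable {X : Type*} [PseudoMetricSpace X] [MeasurableSpace X] [BorelSpace X]

theorem IsOpen.exists_continuous_lt_integral {B : Set X} (hB : IsOpen B) (ν : Measure X)
    [IsFiniteMeasure ν] {w : ℝ} (hw : 0 ≤ w) (hwB : ENNReal.ofReal w < ν B) :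
    ∃ h : X → ℝ, Continuous h ∧ (∀ y, h y ∈ Icc 0 1) ∧ EqOn h 0 Bᶜ ∧ w < ∫ y, h y ∂ν := by
  obtain ⟨K, hKB, hK, hwK⟩ :=
    hB.measurableSet.exists_lt_isClosed_of_ne_top (measure_ne_top ν B) hwB
  obtain ⟨h, h0, h1, h01⟩ := exists_continuous_zero_one_of_isClosed hB.isClosed_compl hK
    (disjoint_compl_left.mono_right hKB)
  refine ⟨h, h.continuous, h01, h0, ?_⟩
  calc w < ν.real K := (ENNReal.ofReal_lt_iff_lt_toReal hw (measure_ne_top ν K)).1 hwK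
    _ = ∫ y in K, h y ∂ν := by
      rw [setIntegral_congr_fun hK.measurableSet h1]
      simp
    _ ≤ ∫ y, h y ∂ν :=
      setIntegral_le_integral (integrable_of_abs_le h.continuous.measurable fun y =>
        abs_le_one_of_mem_Icc (h01 y))
        (ae_of_all _ fun y => (h01 y).1)

end Bump

section Thin

variable {X : Type*} [MeasurableSpace X]

noncomputable def thinMeasure (ν : Measure X) (θ : ℝ) (h : X → ℝ) : Measure X :=
  ν.withDensity fun y => ENNReal.ofReal (1 - θ * h y)

variable {ν : Measure X} [IsFiniteMeasure ν] {h : X → ℝ}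

theorem isFiniteMeasure_thinMeasure {θ : ℝ} (hθh : ∀ y, 0 ≤ θ * h y) :
    IsFiniteMeasure (thinMeasure ν θ h) where
  measure_univ_lt_top := by
    rw [thinMeasure, withDensity_apply _ .univ, Measure.restrict_univ]
    refine (lintegral_mono (g := fun _ => 1) fun y => ?_).trans_lt (by simp)
    exact ENNReal.ofReal_le_one.2 (sub_le_self 1 (hθh y))

variable (hh : Measurable h) (h01 : ∀ y, h y ∈ Icc 0 1)
include hh h01

theorem abs_integral_mul_sub_le {B : Set X} (hB : EqOn h 0 Bᶜ) {φ : X → ℝ} (hφ : Measurable φ)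
    {C : ℝ} (hφC : ∀ y, |φ y| ≤ C) {a ε : ℝ} (hφB : ∀ y ∈ B, |φ y - a| ≤ ε) :
    |∫ y, h y * φ y ∂ν - a * ∫ y, h y ∂ν| ≤ ε * ∫ y, h y ∂ν := by
  have hhφ : Integrable (fun y => h y * φ y) ν :=
    integrable_of_abs_le (hh.mul hφ) fun y => abs_mul_le_of_mem_Icc (h01 y) (hφC y)
  have hhi : Integrable h ν := integrable_of_abs_le hh fun y => abs_le_one_of_mem_Icc (h01 y)
  rw [← integral_const_mul a, ← integral_sub hhφ (hhi.const_mul a), ← integral_const_mul ε,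
    ← Real.norm_eq_abs]
  refine norm_integral_le_of_norm_le (hhi.const_mul ε) (ae_of_all _ fun y => ?_)
  by_cases hy : y ∈ B
  · calc ‖h y * φ y - a * h y‖ = h y * |φ y - a| := by
          rw [Real.norm_eq_abs, mul_comm a, ← mul_sub, abs_mul, abs_of_nonneg (h01 y).1]
      _ ≤ h y * ε := mul_le_mul_of_nonneg_left (hφB y hy) (h01 y).1
      _ = ε * h y := mul_comm _ _
  · simp [hB hy]

theorem integral_thinMeasure {θ : ℝ} (hθh : ∀ y, θ * h y ≤ 1) {g : X → ℝ} (hg : Measurable g)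
    {C : ℝ} (hgC : ∀ y, |g y| ≤ C) :
    ∫ y, g y ∂thinMeasure ν θ h = ∫ y, g y ∂ν - θ * ∫ y, h y * g y ∂ν := by
  have hhg : Integrable (fun y => h y * g y) ν :=
    integrable_of_abs_le (hh.mul hg) fun y => abs_mul_le_of_mem_Icc (h01 y) (hgC y)
  rw [← integral_const_mul, ← integral_sub (integrable_of_abs_le hg hgC) (hhg.const_mul θ)]
  refine (integral_withDensity_eq_integral_smul (f := fun y => (1 - θ * h y).toNNReal)
    (by fun_prop) g).trans (integral_congr_ae (ae_of_all _ fun y => ?_))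
  simp only [NNReal.smul_def, Real.coe_toNNReal _ (sub_nonneg.2 (hθh y)), smul_eq_mul]
  ring

theorem measureReal_thinMeasure_univ {θ : ℝ} (hθh : ∀ y, θ * h y ≤ 1) :
    (thinMeasure ν θ h).real univ = ν.real univ - θ * ∫ y, h y ∂ν := by
  simpa using integral_thinMeasure hh h01 hθh (g := fun _ => (1 : ℝ)) measurable_const
    (C := 1) (fun _ => by simp)

theorem abs_integral_sub_integral_thinMeasure_le {B : Set X} (hB : EqOn h 0 Bᶜ) {φ : X → ℝ}
    (hφ : Measurable φ) {C : ℝ} (hφC : ∀ y, |φ y| ≤ C) {a ε : ℝ} (hφB : ∀ y ∈ B, |φ y - a| ≤ ε)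
    {w : ℝ} (hw : 0 ≤ w) (hh0 : 0 < ∫ y, h y ∂ν) (hθh : ∀ y, w / (∫ y, h y ∂ν) * h y ≤ 1) :
    |∫ y, φ y ∂ν - (w * a + ∫ y, φ y ∂thinMeasure ν (w / ∫ y, h y ∂ν) h)| ≤ ε * w := by
  set c := ∫ y, h y ∂ν
  have hθ : 0 ≤ w / c := div_nonneg hw hh0.le
  rw [integral_thinMeasure hh h01 hθh hφ hφC]
  calc |∫ y, φ y ∂ν - (w * a + (∫ y, φ y ∂ν - w / c * ∫ y, h y * φ y ∂ν))|
      = |w / c * (∫ y, h y * φ y ∂ν - a * c)| := by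
        congr 1
        field_simp
        ring
    _ = w / c * |∫ y, h y * φ y ∂ν - a * c| := by rw [abs_mul, abs_of_nonneg hθ]
    _ ≤ w / c * (ε * c) := by
        gcongr
        exact abs_integral_mul_sub_le hh h01 hB hφ hφC hφB
    _ = ε * w := by field_simp

end Thin

section WeakContinuity

variable {X : Type*} [TopologicalSpace X] [MeasurableSpace X]

/-- Continuity of `x ↦ ν x` on `U` for the weak topology; on `univ` it is the Feller property. -/
def WeaklyContinuousOn (ν : X → Measure X) (U : Set X) : Prop :=
  ∀ g : X → ℝ, Continuous g → (∃ C, ∀ y, |g y| ≤ C) → ContinuousOn (fun x => ∫ y, g y ∂ν x) U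

variable {ν : X → Measure X} {U : Set X}

theorem WeaklyContinuousOn.mono (hν : WeaklyContinuousOn ν U) {V : Set X} (hVU : V ⊆ U) :
    WeaklyContinuousOn ν V :=
  fun g hg hgC => (hν g hg hgC).mono hVU

variable [OpensMeasurableSpace X]

theorem weaklyContinuousOn_dirac : WeaklyContinuousOn Measure.dirac (univ : Set X) :=
  fun g hg _ => by
    simpa only [fun x => integral_dirac' g x hg.stronglyMeasurable] using hg.continuousOn

variable [∀ x, IsFiniteMeasure (ν x)]

theorem WeaklyContinuousOn.bind (hν : WeaklyContinuousOn ν U) {κ : X → Measure X}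
    (hκ : Measurable κ) [∀ x, IsProbabilityMeasure (κ x)] (hκc : WeaklyContinuousOn κ univ) :
    WeaklyContinuousOn (fun x => (ν x).bind κ) U := by
  rintro g hg ⟨C, hgC⟩
  simp only [fun x => integral_bind_of_abs_le hκ (ν x) hg.measurable hgC]
  refine hν _ (continuousOn_univ.1 (hκc g hg ⟨C, hgC⟩)) ⟨C, fun y => ?_⟩
  simpa using abs_integral_le_of_abs_le (μ := κ y) hgC

theorem WeaklyContinuousOn.thinMeasure (hν : WeaklyContinuousOn ν U) {θ : X → ℝ}
    (hθ : ContinuousOn θ U) {h : X → ℝ} (hh : Continuous h) (h01 : ∀ y, h y ∈ Icc 0 1)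
    (hθh : ∀ x ∈ U, ∀ y, θ x * h y ≤ 1) :
    WeaklyContinuousOn (fun x => thinMeasure (ν x) (θ x) h) U := by
  rintro g hg ⟨C, hgC⟩
  refine ((hν g hg ⟨C, hgC⟩).sub (hθ.mul (hν _ (hh.mul hg)
    ⟨C, fun y => abs_mul_le_of_mem_Icc (h01 y) (hgC y)⟩))).congr fun x hx => ?_
  exact integral_thinMeasure hh.measurable h01 (hθh x hx) hg.measurable hgC

end WeakContinuity

section Semigroup

variable {X : Type*} [TopologicalSpace X] [MeasurableSpace X]
  {T : Type*} [AddCommMonoid T] [PartialOrder T]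

/-- `P` is a Feller Markov semigroup on the times `t ≥ τ`: `T = ℕ₊` is `τ = 1` in `ℕ` and
`T = [0, ∞)` is `τ = 0` in `ℝ`. -/
structure IsFellerSemigroupFrom (P : T → X → Measure X) (τ : T) : Prop where
  isProbabilityMeasure : ∀ t, τ ≤ t → ∀ x, IsProbabilityMeasure (P t x)
  measurable : ∀ t, τ ≤ t → Measurable (P t)
  add_eq_bind : ∀ s t, τ ≤ s → τ ≤ t → ∀ x, P (s + t) x = (P s x).bind (P t)
  weaklyContinuousOn : ∀ t, τ ≤ t → WeaklyContinuousOn (P t) univ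

namespace IsFellerSemigroupFrom

variable {P : T → X → Measure X} {τ : T} (hP : IsFellerSemigroupFrom P τ)
include hP

theorem lt_one_of_lt_bind_apply {B : Set X} {α : ℝ}
    (hB : ∀ ν : Measure X, IsProbabilityMeasure ν → ∃ s, τ ≤ s ∧ ENNReal.ofReal α < ν.bind (P s) B)
    (x₀ : X) : α < 1 := by
  obtain ⟨s, hs, hsB⟩ := hB (Measure.dirac x₀) inferInstance
  have := hP.isProbabilityMeasure s hs
  rw [Measure.dirac_bind (hP.measurable s hs)] at hsB
  exact ENNReal.ofReal_lt_one.1 (hsB.trans_le prob_le_one)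

variable {f : X → ℝ} {C : ℝ} (hfC : ∀ y, |f y| ≤ C)
include hfC

theorem abs_integral_le {t : T} (ht : τ ≤ t) (x : X) : |∫ y, f y ∂P t x| ≤ C := by
  have := hP.isProbabilityMeasure t ht
  simpa using abs_integral_le_of_abs_le (μ := P t x) hfC

variable (hf : Measurable f)
include hf

theorem integral_integral_add {s u : T} (hs : τ ≤ s) (hu : τ ≤ u) (ρ : Measure X)
    [IsFiniteMeasure ρ] :
    ∫ x, ∫ y, f y ∂P (s + u) x ∂ρ = ∫ x, ∫ y, f y ∂P u x ∂ρ.bind (P s) := by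
  have := hP.isProbabilityMeasure s hs
  have := hP.isProbabilityMeasure u hu
  rw [integral_bind_of_abs_le (hP.measurable s hs) ρ (hf.integral_measure (hP.measurable u hu))
    (hP.abs_integral_le hfC hu)]
  simp only [hP.add_eq_bind s u hs hu, integral_bind_of_abs_le (hP.measurable u hu) _ hf hfC]

end IsFellerSemigroupFrom

end Semigroup

section Coupling

variable {X : Type*} [PseudoMetricSpace X] [MeasurableSpace X]
  {T : Type*} [AddCommMonoid T] [PartialOrder T]

/-- For `x ∈ U`, `P (shift + u) x` is the sum of the unmatched part `(rem x).bind (P u)`, of mass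
`m`, and a matched part whose integral of `f` is `coupled u`, independently of `x`, up to
`ε (1 - m)`. -/
structure CouplingStage (P : T → X → Measure X) (f : X → ℝ) (x₀ : X) (N : T) (ε m : ℝ) where
  U : Set X
  rem : X → Measure X
  shift : T
  coupled : T → ℝ
  isOpen_U : IsOpen U
  mem_U : x₀ ∈ U
  shift_nonneg : 0 ≤ shift
  isFiniteMeasure_rem : ∀ x, IsFiniteMeasure (rem x)
  measureReal_rem_univ : ∀ x ∈ U, (rem x).real univ = m
  weaklyContinuousOn_rem : WeaklyContinuousOn rem U
  abs_integral_sub_le : ∀ x ∈ U, ∀ u, N ≤ u →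
    |∫ y, f y ∂P (shift + u) x - (coupled u + ∫ y, ∫ v, f v ∂P u y ∂rem x)| ≤ ε * (1 - m)

theorem IsFellerSemigroupFrom.exists_bump [BorelSpace X] {P : T → X → Measure X} {τ : T}
    (hP : IsFellerSemigroupFrom P τ) {B : Set X} (hB : IsOpen B) {α : ℝ} (hα : 0 < α)
    (hii : ∀ ν : Measure X, IsProbabilityMeasure ν →
      ∃ s, τ ≤ s ∧ ENNReal.ofReal α < ν.bind (P s) B)
    (ρ : Measure X) [IsFiniteMeasure ρ] (hρ : 0 < ρ.real univ) :
    ∃ s, τ ≤ s ∧ ∃ h : X → ℝ, Continuous h ∧ (∀ y, h y ∈ Icc 0 1) ∧ EqOn h 0 Bᶜ ∧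
      α * ρ.real univ < ∫ y, h y ∂ρ.bind (P s) := by
  have : NeZero ρ := ⟨fun h0 => by simp [h0] at hρ⟩
  obtain ⟨s, hs, hsB⟩ := exists_lt_bind_apply_mul hii ρ
  have := hP.isProbabilityMeasure s hs
  have := isFiniteMeasure_bind (hP.measurable s hs) ρ
  refine ⟨s, hs, hB.exists_continuous_lt_integral _ (by positivity) ?_⟩
  rwa [ENNReal.ofReal_mul hα.le, ofReal_measureReal]

variable {P : T → X → Measure X} {τ : T} (hP : IsFellerSemigroupFrom P τ) {f : X → ℝ}
  {C : ℝ} (hfC : ∀ y, |f y| ≤ C) {x₀ : X} {N : T} (hN : τ ≤ N) {ε : ℝ}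
include hP hN

include hfC in
theorem CouplingStage.abs_integral_sub_integral_le [IsOrderedAddMonoid T] [AddLeftReflectLE T]
    [ExistsAddOfLE T] {m : ℝ} (S : CouplingStage P f x₀ N ε m) {x : X} (hx : x ∈ S.U) {t : T}
    (ht : S.shift + N ≤ t) :
    |∫ y, f y ∂P t x - ∫ y, f y ∂P t x₀| ≤ 2 * (ε * (1 - m)) + 2 * (C * m) := by
  obtain ⟨d, hd, rfl⟩ := exists_nonneg_add_of_le ht
  have hu : N ≤ N + d := le_add_of_nonneg_right hd
  have hrem : ∀ z ∈ S.U, |∫ y, ∫ v, f v ∂P (N + d) y ∂S.rem z| ≤ C * m := fun z hz => by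
    have := S.isFiniteMeasure_rem z
    simpa only [S.measureReal_rem_univ z hz] using
      abs_integral_le_of_abs_le (μ := S.rem z) (hP.abs_integral_le hfC (hN.trans hu))
  have h₁ := S.abs_integral_sub_le x hx (N + d) hu
  have h₂ := S.abs_integral_sub_le x₀ S.mem_U (N + d) hu
  have h₃ := hrem x hx
  have h₄ := hrem x₀ S.mem_U
  rw [add_assoc]
  rw [abs_le] at *
  constructor <;> linarith

variable (hf : Measurable f)
include hf

theorem CouplingStage.nonempty_one [BorelSpace X] : Nonempty (CouplingStage P f x₀ N ε 1) :=
  ⟨{ U := univ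
     rem := Measure.dirac
     shift := 0
     coupled := 0
     isOpen_U := isOpen_univ
     mem_U := mem_univ x₀
     shift_nonneg := le_rfl
     isFiniteMeasure_rem := fun _ => inferInstance
     measureReal_rem_univ := fun _ _ => by simp
     weaklyContinuousOn_rem := weaklyContinuousOn_dirac
     abs_integral_sub_le := fun x _ u hu => by
       rw [integral_dirac' _ x
         (hf.integral_measure (hP.measurable u (hN.trans hu))).stronglyMeasurable]
       simp }⟩

variable [IsOrderedAddMonoid T] (hτ : 0 ≤ τ) {B : Set X}
  (hi : ∀ x ∈ B, ∀ t, N ≤ t → |∫ y, f y ∂P t x - ∫ y, f y ∂P t x₀| ≤ ε)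
include hfC hτ hi

theorem CouplingStage.abs_integral_sub_le_thinMeasure {m : ℝ} (S : CouplingStage P f x₀ N ε m)
    {s : T} (hs : τ ≤ s) {h : X → ℝ} (hh : Measurable h) (h01 : ∀ y, h y ∈ Icc 0 1)
    (hB0 : EqOn h 0 Bᶜ) {w : ℝ} (hw : 0 ≤ w) {x : X} (hx : x ∈ S.U)
    (hc : 0 < ∫ y, h y ∂(S.rem x).bind (P s))
    (hθh : ∀ y, w / (∫ y, h y ∂(S.rem x).bind (P s)) * h y ≤ 1) {u : T} (hu : N ≤ u) :
    |∫ y, f y ∂P (S.shift + s + u) x - ((S.coupled (s + u) + w * ∫ y, f y ∂P u x₀) +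
      ∫ y, ∫ v, f v ∂P u y ∂thinMeasure ((S.rem x).bind (P s))
        (w / ∫ y, h y ∂(S.rem x).bind (P s)) h)| ≤ ε * (1 - m) + ε * w := by
  have := S.isFiniteMeasure_rem
  have := hP.isProbabilityMeasure s hs
  have := isFiniteMeasure_bind (hP.measurable s hs) (S.rem x)
  have hu' : τ ≤ u := hN.trans hu
  have hprev :=
    S.abs_integral_sub_le x hx (s + u) (hu.trans (le_add_of_nonneg_left (hτ.trans hs)))
  rw [hP.integral_integral_add hfC hf hs hu'] at hprev
  have hrem := abs_integral_sub_integral_thinMeasure_le hh h01 hB0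
    (hf.integral_measure (hP.measurable u hu')) (hP.abs_integral_le hfC hu')
    (fun y hy => hi y hy u hu) hw hc hθh
  rw [add_assoc S.shift]
  refine (abs_sub_le _ (S.coupled (s + u) + ∫ y, ∫ v, f v ∂P u y ∂(S.rem x).bind (P s)) _).trans ?_
  rw [add_assoc (S.coupled (s + u)), add_sub_add_left_eq_sub]
  exact add_le_add hprev hrem

variable [BorelSpace X] (hB : IsOpen B) {α : ℝ} (hα : 0 < α)
  (hii : ∀ ν : Measure X, IsProbabilityMeasure ν →
    ∃ s, τ ≤ s ∧ ENNReal.ofReal α < ν.bind (P s) B)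
include hB hα hii

theorem CouplingStage.nonempty_succ {m : ℝ} (hm : 0 < m) (S : CouplingStage P f x₀ N ε m) :
    Nonempty (CouplingStage P f x₀ N ε ((1 - α) * m)) := by
  have := S.isFiniteMeasure_rem
  have hm₀ := S.measureReal_rem_univ x₀ S.mem_U
  obtain ⟨s, hs, h, hh, h01, hB0, hwh⟩ := hP.exists_bump hB hα hii (S.rem x₀) (hm₀.symm ▸ hm)
  rw [hm₀] at hwh
  have := hP.isProbabilityMeasure s hs
  set ν := fun x => (S.rem x).bind (P s)
  have := fun x => isFiniteMeasure_bind (hP.measurable s hs) (S.rem x)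
  have hνU : WeaklyContinuousOn ν S.U :=
    S.weaklyContinuousOn_rem.bind (hP.measurable s hs) (hP.weaklyContinuousOn s hs)
  set w := α * m
  have hw : 0 < w := mul_pos hα hm
  set c := fun x => ∫ y, h y ∂ν x
  have hc : ContinuousOn c S.U := hνU h hh ⟨1, fun y => abs_le_one_of_mem_Icc (h01 y)⟩
  set U' := S.U ∩ c ⁻¹' Ioi w
  have hc₀ : ∀ x ∈ U', 0 < c x := fun x hx => hw.trans hx.2
  have hθh : ∀ x ∈ U', ∀ y, w / c x * h y ≤ 1 := fun x hx y =>
    (mul_le_of_le_one_right (div_nonneg hw.le (hc₀ x hx).le) (h01 y).2).trans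
      ((div_le_one (hc₀ x hx)).2 hx.2.le)
  refine ⟨{ U := U'
            rem := fun x => thinMeasure (ν x) (w / c x) h
            shift := S.shift + s
            coupled := fun u => S.coupled (s + u) + w * ∫ y, f y ∂P u x₀
            isOpen_U := hc.isOpen_inter_preimage S.isOpen_U isOpen_Ioi
            mem_U := ⟨S.mem_U, hwh⟩
            shift_nonneg := add_nonneg S.shift_nonneg (hτ.trans hs)
            isFiniteMeasure_rem := fun x => isFiniteMeasure_thinMeasure fun y =>
              mul_nonneg (div_nonneg hw.le (integral_nonneg fun y => (h01 y).1)) (h01 y).1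
            measureReal_rem_univ := fun x hx => by
              rw [measureReal_thinMeasure_univ hh.measurable h01 (hθh x hx),
                div_mul_cancel₀ _ (hc₀ x hx).ne', measureReal_bind_univ (hP.measurable s hs),
                S.measureReal_rem_univ x hx.1]
              ring
            weaklyContinuousOn_rem := (hνU.mono inter_subset_left).thinMeasure
              (continuousOn_const.div (hc.mono inter_subset_left) fun x hx => (hc₀ x hx).ne')
              hh h01 hθh
            abs_integral_sub_le := fun x hx u hu =>
              (S.abs_integral_sub_le_thinMeasure hP hfC hN hf hτ hi hs hh.measurable h01 hB0
                hw.le hx.1 (hc₀ x hx) (hθh x hx) hu).trans_eq (by ring) }⟩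

theorem CouplingStage.nonempty_pow (hα₁ : α < 1) (k : ℕ) :
    Nonempty (CouplingStage P f x₀ N ε ((1 - α) ^ k)) := by
  induction k with
  | zero => simpa using CouplingStage.nonempty_one hP hN hf
  | succ k ih =>
    obtain ⟨S⟩ := ih
    rw [pow_succ']
    exact S.nonempty_succ hP hfC hN hf hτ hi hB hα hii (pow_pos (sub_pos.2 hα₁) k)

end Coupling

theorem IsFellerSemigroupFrom.eventually_abs_integral_sub_lt {X : Type*} [PseudoMetricSpace X]
    [MeasurableSpace X] [BorelSpace X] {T : Type*} [AddCommMonoid T] [PartialOrder T]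
    [IsOrderedCancelAddMonoid T] [ExistsAddOfLE T] {P : T → X → Measure X} {τ : T}
    (hP : IsFellerSemigroupFrom P τ) (hτ : 0 ≤ τ) {f : X → ℝ} (hf : Measurable f) {C : ℝ}
    (hfC : ∀ y, |f y| ≤ C) {x₀ : X}
    (h : ∀ ε > 0, ∃ (B : Set X) (N : T) (α : ℝ), IsOpen B ∧ τ ≤ N ∧ 0 < α ∧
      (∀ x ∈ B, ∀ t, N ≤ t → |∫ y, f y ∂P t x - ∫ y, f y ∂P t x₀| ≤ ε) ∧
      ∀ ν : Measure X, IsProbabilityMeasure ν → ∃ s, τ ≤ s ∧ ENNReal.ofReal α < ν.bind (P s) B) :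
    ∀ ε > 0, ∃ δ > 0, ∃ t₀, τ ≤ t₀ ∧ ∀ x, dist x x₀ < δ → ∀ t, t₀ ≤ t →
      |∫ y, f y ∂P t x - ∫ y, f y ∂P t x₀| < ε := by
  intro ε hε
  obtain ⟨B, N, α, hB, hN, hα, hi, hii⟩ := h (ε / 4) (by positivity)
  have hα₁ := hP.lt_one_of_lt_bind_apply hii x₀
  have hC : 0 ≤ C := (abs_nonneg _).trans (hfC x₀)
  obtain ⟨k, hk⟩ := exists_pow_lt_of_lt_one (show 0 < ε / (4 * (C + 1)) by positivity)
    (sub_lt_self 1 hα)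
  obtain ⟨S⟩ := CouplingStage.nonempty_pow hP hfC hN hf hτ hi hB hα hii hα₁ k
  obtain ⟨δ, hδ, hball⟩ := Metric.isOpen_iff.1 S.isOpen_U x₀ S.mem_U
  refine ⟨δ, hδ, S.shift + N, le_add_of_nonneg_of_le S.shift_nonneg hN, fun x hx t ht => ?_⟩
  have hm : 0 ≤ (1 - α) ^ k := pow_nonneg (sub_nonneg.2 hα₁.le) k
  have hCm : C * (1 - α) ^ k < ε / 4 :=
    calc C * (1 - α) ^ k ≤ (C + 1) * (1 - α) ^ k := by nlinarith
      _ < (C + 1) * (ε / (4 * (C + 1))) := by gcongr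
      _ = ε / 4 := by field_simp
  calc _ ≤ 2 * (ε / 4 * (1 - (1 - α) ^ k)) + 2 * (C * (1 - α) ^ k) :=
        S.abs_integral_sub_integral_le hP hfC hN (hball hx) ht
    _ < ε := by nlinarith

theorem IsMarkovSemigroupN.isFellerSemigroupFrom {X : Type*} [PseudoMetricSpace X]
    [MeasurableSpace X] {P : ℕ → X → Measure X}
    (hP : IsMarkovSemigroupN P) (hF : FellerN P) : IsFellerSemigroupFrom P 1 where
  isProbabilityMeasure n hn x := hP.1 n x hn
  measurable n hn := Measure.measurable_of_measurable_coe _ fun A hA => hP.2.1 n A hn hA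
  add_eq_bind m n hm hn x :=
    eq_bind_of_forall_apply (Measure.measurable_of_measurable_coe _ fun A hA => hP.2.1 n A hn hA)
      fun A hA => hP.2.2 m n x A hm hn hA
  weaklyContinuousOn n hn g hg hgC := (hF n hn g hg hgC).1.continuousOn

theorem IsMarkovSemigroupR.isFellerSemigroupFrom {X : Type*} [PseudoMetricSpace X]
    [MeasurableSpace X] {P : ℝ → X → Measure X}
    (hP : IsMarkovSemigroupR P) (hF : FellerR P) : IsFellerSemigroupFrom P 0 where
  isProbabilityMeasure t ht x := hP.1 t x ht
  measurable t ht := Measure.measurable_of_measurable_coe _ fun A hA => hP.2.1 t A ht hA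
  add_eq_bind s t hs ht x :=
    eq_bind_of_forall_apply (Measure.measurable_of_measurable_coe _ fun A hA => hP.2.1 t A ht hA)
      fun A hA => hP.2.2.2 s t x A hs ht hA
  weaklyContinuousOn t ht g hg hgC := (hF t ht g hg hgC).1.continuousOn

/-- STATEMENT 9 (Lemma 1, with condition (b')), stated for both `T = ℕ₊` (first
conjunct) and `T = [0,∞)` (second conjunct). -/
theorem stmt9 :
    (∀ (X : Type u) [MetricSpace X] [CompleteSpace X] [TopologicalSpace.SeparableSpace X]
        [MeasurableSpace X] [BorelSpace X]
        (P : ℕ → X → Measure X) (μ : Measure X) (x₀ : X),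
      IsMarkovSemigroupN P → FellerN P →
      IsProbabilityMeasure μ → ErgodicMeasN P μ → (interior (msupp μ)).Nonempty →
      (∀ f : X → ℝ, BddLip f → ∀ ε > 0,
        ∃ (z : X) (r : ℝ) (N : ℕ) (α : ℝ),
          0 < r ∧ Metric.ball z r ⊆ msupp μ ∧ 1 ≤ N ∧ 0 < α ∧
          (∀ x ∈ Metric.ball z r, ∀ n, N ≤ n → |PfN P n f x - PfN P n f x₀| ≤ ε) ∧
          (∀ ν : Measure X, IsProbabilityMeasure ν →
            ∃ m : ℕ, 1 ≤ m ∧ ENNReal.ofReal α < (ν.bind (P m)) (Metric.ball z r))) →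
      EventualEPropN P x₀) ∧
    (∀ (X : Type u) [MetricSpace X] [CompleteSpace X] [TopologicalSpace.SeparableSpace X]
        [MeasurableSpace X] [BorelSpace X]
        (P : ℝ → X → Measure X) (μ : Measure X) (x₀ : X),
      IsMarkovSemigroupR P → FellerR P →
      IsProbabilityMeasure μ → ErgodicMeasR P μ → (interior (msupp μ)).Nonempty →
      (∀ f : X → ℝ, BddLip f → ∀ ε > 0,
        ∃ (z : X) (r : ℝ) (N : ℝ) (α : ℝ),
          0 < r ∧ Metric.ball z r ⊆ msupp μ ∧ 0 ≤ N ∧ 0 < α ∧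
          (∀ x ∈ Metric.ball z r, ∀ t : ℝ, N ≤ t → |PfR P t f x - PfR P t f x₀| ≤ ε) ∧
          (∀ ν : Measure X, IsProbabilityMeasure ν →
            ∃ s : ℝ, 0 ≤ s ∧ ENNReal.ofReal α < (ν.bind (P s)) (Metric.ball z r))) →
      EventualEPropR P x₀) := by
  refine ⟨fun X _ _ _ _ _ P μ x₀ hP hF _ _ _ hyp f hf => ?_,
    fun X _ _ _ _ _ P μ x₀ hP hF _ _ _ hyp f hf => ?_⟩ <;>
  · have ⟨⟨K, hK⟩, C, hfC⟩ := hf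
    refine (hP.isFellerSemigroupFrom hF).eventually_abs_integral_sub_lt (by norm_num)
      hK.continuous.measurable hfC fun ε hε => ?_
    obtain ⟨z, r, N, α, -, -, hN, hα, hi, hii⟩ := hyp f hf ε hε
    exact ⟨ball z r, N, α, isOpen_ball, hN, hα, hi, hii⟩
end

section
/- Let {P_t}_{t∈T} be a Markov semigroup on a Polish space (X, ρ) (T = ℕ₊, or T = [0,∞) with s ↦ P_s(x,A) Borel measurable for every x ∈ X and Borel set A) which is Feller and eventually continuous at every point of X. Let f : X → ℝ be bounded Lipschitz, let D be a countable dense subset of X, and let s_n ∈ T with s_n → ∞ be such that lim_{n→∞} Q_{s_n} f(x) exists for every x ∈ D, where Q_t f(x) = ∫_X f dQ_t(x,·). Then Q_{s_n} f converges pointwise on all of X, and the limit function g(x) = lim_{n→∞} Q_{s_n} f(x) is bounded and continuous on X. -/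
open MeasureTheory Filter Topology Metric ENNReal
open scoped Classical

universe u

/-!
Eventual continuity of `P_t` at `z` says that `P_t f` is *asymptotically equicontinuous* at `z`:
for `x` near `z`, `|P_t f x - P_t f z|` is eventually small. Averaging preserves this, so the
Cesàro averages `Q_t f` are asymptotically equicontinuous at every point as well. An
asymptotically equicontinuous sequence of functions into a complete space that converges on a
dense set converges everywhere (a `3ε` argument shows the sequence is Cauchy at every point),
and its limit is continuous (pass to the limit in `dist (u n x) (u n z) ≤ ε`). The limit is
bounded because every `Q_t f` is bounded by `sup |f|`.
-/

open Finset

section AsymptoticEquicontinuity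

variable {ι X Y : Type*} [TopologicalSpace X] [PseudoMetricSpace Y]

def AsymptoticallyEquicontinuousAt (l : Filter ι) (u : ι → X → Y) (z : X) : Prop :=
  ∀ ε > 0, ∀ᶠ x in 𝓝 z, ∀ᶠ i in l, dist (u i x) (u i z) ≤ ε

theorem AsymptoticallyEquicontinuousAt.comp_tendsto {κ : Type*} {l : Filter ι} {l' : Filter κ}
    {u : ι → X → Y} {z : X} (hu : AsymptoticallyEquicontinuousAt l u z) {s : κ → ι}
    (hs : Tendsto s l' l) : AsymptoticallyEquicontinuousAt l' (fun k => u (s k)) z :=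
  fun ε hε => (hu ε hε).mono fun _ hx => hs.eventually hx

theorem AsymptoticallyEquicontinuousAt.continuousAt_of_tendsto {l : Filter ι} [l.NeBot]
    {u : ι → X → Y} {g : X → Y} {z : X} (hu : AsymptoticallyEquicontinuousAt l u z)
    (hg : ∀ x, Tendsto (fun i => u i x) l (𝓝 (g x))) : ContinuousAt g z :=
  Metric.tendsto_nhds.mpr fun ε hε => (hu (ε / 2) (half_pos hε)).mono fun x hx =>
    (le_of_tendsto ((hg x).dist (hg z)) hx).trans_lt (half_lt_self hε)

theorem AsymptoticallyEquicontinuousAt.cauchySeq {u : ℕ → X → Y} {x : X}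
    (hu : AsymptoticallyEquicontinuousAt atTop u x) {D : Set X} (hD : Dense D)
    (hconv : ∀ d ∈ D, CauchySeq fun n => u n d) : CauchySeq fun n => u n x := by
  refine Metric.cauchySeq_iff.mpr fun ε hε => ?_
  obtain ⟨d, hdD, hd⟩ := hD.inter_nhds_nonempty (hu (ε / 3) (by positivity))
  obtain ⟨N₁, hN₁⟩ := Metric.cauchySeq_iff.mp (hconv d hdD) (ε / 3) (by positivity)
  obtain ⟨N₂, hN₂⟩ := eventually_atTop.mp hd
  refine ⟨max N₁ N₂, fun m hm n hn => ?_⟩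
  have hm₂ := hN₂ m (le_of_max_le_right hm)
  have hn₂ := hN₂ n (le_of_max_le_right hn)
  have hmn := hN₁ m (le_of_max_le_left hm) n (le_of_max_le_left hn)
  rw [dist_comm] at hm₂
  calc dist (u m x) (u n x)
        ≤ dist (u m x) (u m d) + dist (u m d) (u n d) + dist (u n d) (u n x) :=
          dist_triangle4 _ _ _ _
    _ < ε := by linarith

theorem exists_continuous_tendsto_of_dense [CompleteSpace Y] {u : ℕ → X → Y}
    (hu : ∀ z, AsymptoticallyEquicontinuousAt atTop u z) {D : Set X} (hD : Dense D)
    (hconv : ∀ d ∈ D, ∃ L, Tendsto (fun n => u n d) atTop (𝓝 L)) :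
    ∃ g : X → Y, Continuous g ∧ ∀ x, Tendsto (fun n => u n x) atTop (𝓝 (g x)) := by
  have hcauchy (x : X) : CauchySeq fun n => u n x :=
    (hu x).cauchySeq hD fun d hd => (hconv d hd).choose_spec.cauchySeq
  choose g hg using fun x => cauchySeq_tendsto_of_complete (hcauchy x)
  exact ⟨g, continuous_iff_continuousAt.mpr fun z => (hu z).continuousAt_of_tendsto hg, hg⟩

theorem exists_bounded_continuous_tendsto_of_dense {u : ℕ → X → ℝ}
    (hu : ∀ z, AsymptoticallyEquicontinuousAt atTop u z) {C : ℝ}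
    (hC : ∀ x, ∀ᶠ n in atTop, |u n x| ≤ C) {D : Set X} (hD : Dense D)
    (hconv : ∀ d ∈ D, ∃ L, Tendsto (fun n => u n d) atTop (𝓝 L)) :
    ∃ g : X → ℝ, Continuous g ∧ (∃ C, ∀ x, |g x| ≤ C) ∧
      ∀ x, Tendsto (fun n => u n x) atTop (𝓝 (g x)) := by
  obtain ⟨g, hgc, hg⟩ := exists_continuous_tendsto_of_dense hu hD hconv
  exact ⟨g, hgc, ⟨C, fun x => le_of_tendsto (hg x).abs (hC x)⟩, hg⟩

end AsymptoticEquicontinuity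

section Averages

theorem sum_Icc_one_eq_sum_range {M : Type*} [AddCommMonoid M] (a : ℕ → M) (n : ℕ) :
    ∑ k ∈ Icc 1 n, a k = ∑ i ∈ range n, a (i + 1) := by
  rw [range_eq_Ico, sum_Ico_add' a 0 n 1, zero_add, Finset.Ico_add_one_right_eq_Icc]

theorem eventually_abs_cesaro_lt {a : ℕ → ℝ} {ε ε' : ℝ} (ha : ∀ᶠ k in atTop, |a k| ≤ ε)
    (hε : ε < ε') : ∀ᶠ n : ℕ in atTop, |(1 / (n : ℝ)) * ∑ k ∈ Icc 1 n, a k| < ε' := by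
  -- `max |a (i + 1)| ε` is eventually constant, so its Cesàro means tend to `ε`.
  have hmax : Tendsto (fun i => max |a (i + 1)| ε) atTop (𝓝 ε) :=
    tendsto_const_nhds.congr' <| ((tendsto_add_atTop_nat 1).eventually ha).mono
      fun _ hi => (max_eq_right hi).symm
  filter_upwards [hmax.cesaro.eventually (gt_mem_nhds hε)] with n hn
  refine lt_of_le_of_lt ?_ hn
  rw [abs_mul, one_div, abs_of_nonneg (by positivity), sum_Icc_one_eq_sum_range]
  gcongr
  exact (abs_sum_le_sum_abs _ _).trans (sum_le_sum fun i _ => le_max_left _ _)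

open intervalIntegral in
theorem eventually_abs_average_Ioc_lt {h : ℝ → ℝ} {M ε ε' : ℝ}
    (hint : ∀ t ≥ 0, IntervalIntegrable h volume 0 t) (hM : ∀ r ≥ 0, |h r| ≤ M)
    (ha : ∀ᶠ r in atTop, |h r| ≤ ε) (hε : ε < ε') :
    ∀ᶠ t in atTop, |(1 / t) * ∫ r in Set.Ioc 0 t, h r| < ε' := by
  obtain ⟨t₀, ht₀⟩ := eventually_atTop.mp ha
  set t₁ := max t₀ 0
  have hε₀ : 0 ≤ ε := (abs_nonneg _).trans (ht₀ t₀ le_rfl)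
  have hlim : Tendsto (fun t => M * t₁ / t + ε) atTop (𝓝 ε) := by
    simpa using (tendsto_const_nhds (x := M * t₁)).div_atTop tendsto_id |>.add_const ε
  filter_upwards [hlim.eventually (gt_mem_nhds hε), eventually_ge_atTop t₁,
    eventually_gt_atTop 0] with t hlt ht₁ ht
  have ht₁₀ : 0 ≤ t₁ := le_max_right _ _
  have hsplit : ∫ r in Set.Ioc 0 t, h r = (∫ r in 0..t₁, h r) + ∫ r in t₁..t, h r := by
    rw [← integral_of_le ht.le, integral_add_adjacent_intervals (hint t₁ ht₁₀)
      ((hint t₁ ht₁₀).symm.trans (hint t ht.le))]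
  have hhead : |∫ r in 0..t₁, h r| ≤ M * t₁ := by
    have := norm_integral_le_of_norm_le_const fun r hr =>
      (Real.norm_eq_abs _).trans_le (hM r (Set.uIoc_of_le ht₁₀ ▸ hr).1.le)
    rwa [sub_zero, abs_of_nonneg ht₁₀, Real.norm_eq_abs] at this
  have htail : |∫ r in t₁..t, h r| ≤ ε * (t - t₁) := by
    have := norm_integral_le_of_norm_le_const fun r hr => (Real.norm_eq_abs _).trans_le <|
      ht₀ r ((le_max_left _ _).trans (Set.uIoc_of_le ht₁ ▸ hr).1.le)
    rwa [abs_of_nonneg (sub_nonneg.mpr ht₁), Real.norm_eq_abs] at this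
  calc |(1 / t) * ∫ r in Set.Ioc 0 t, h r|
      ≤ t⁻¹ * (M * t₁ + ε * (t - t₁)) := by
        rw [abs_mul, one_div, abs_of_pos (inv_pos.mpr ht), hsplit]
        gcongr
        exact (abs_add_le _ _).trans (add_le_add hhead htail)
    _ ≤ M * t₁ / t + ε := by
        rw [inv_mul_le_iff₀ ht, mul_add, mul_div_cancel₀ _ ht.ne']
        nlinarith
    _ < ε' := hlt

end Averages

theorem abs_integral_le_of_forall_abs_le {α : Type*} [MeasurableSpace α] {μ : Measure α}
    [IsProbabilityMeasure μ] {f : α → ℝ} {C : ℝ} (hC : ∀ x, |f x| ≤ C) : |∫ x, f x ∂μ| ≤ C := by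
  simpa using norm_integral_le_of_norm_le_const (μ := μ) 
    (Eventually.of_forall fun x => (Real.norm_eq_abs _).trans_le (hC x))

section DiscreteTime

variable {X : Type*} [MeasurableSpace X] {P : ℕ → X → Measure X} {f : X → ℝ} {C : ℝ}

theorem IsMarkovSemigroupN.abs_PfN_le (hP : IsMarkovSemigroupN P) (hC : ∀ y, |f y| ≤ C)
    {k : ℕ} (hk : 1 ≤ k) (x : X) : |PfN P k f x| ≤ C :=
  have := hP.1 k x hk
  abs_integral_le_of_forall_abs_le hC

theorem IsMarkovSemigroupN.abs_QfN_le (hP : IsMarkovSemigroupN P) (hC : ∀ y, |f y| ≤ C)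
    {n : ℕ} (hn : 1 ≤ n) (x : X) : |QfN P n f x| ≤ C := by
  rw [QfN, abs_mul, one_div, abs_of_nonneg (by positivity), inv_mul_le_iff₀ (by positivity)]
  calc |∑ k ∈ Icc 1 n, PfN P k f x| ≤ ∑ k ∈ Icc 1 n, |PfN P k f x| := abs_sum_le_sum_abs _ _
    _ ≤ ∑ _k ∈ Icc 1 n, C := sum_le_sum fun k hk => hP.abs_PfN_le hC (mem_Icc.mp hk).1 x
    _ = n * C := by simp

theorem EvContN.asymptoticallyEquicontinuousAt_QfN [PseudoMetricSpace X] {z : X}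
    (hz : EvContN P z) (hP : IsMarkovSemigroupN P) (hf : BddLip f) :
    AsymptoticallyEquicontinuousAt atTop (fun n => QfN P n f) z := by
  intro ε hε
  obtain ⟨C, hC⟩ := hf.2
  obtain ⟨δ, hδ, hδz⟩ := hz f hf (ε / 3) (by positivity)
  refine Metric.eventually_nhds_iff.mpr ⟨δ, hδ, fun x hx => ?_⟩
  have hbdd : IsBoundedUnder (· ≤ ·) atTop fun k => |PfN P k f x - PfN P k f z| := by
    refine isBoundedUnder_of_eventually_le (a := C + C) ?_
    filter_upwards [eventually_ge_atTop 1] with k hk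
    exact (abs_sub _ _).trans (add_le_add (hP.abs_PfN_le hC hk x) (hP.abs_PfN_le hC hk z))
  have hclose : ∀ᶠ k in atTop, |PfN P k f x - PfN P k f z| ≤ ε / 2 :=
    (eventually_lt_of_limsup_lt ((hδz x hx).trans_lt (by linarith)) hbdd).mono
      fun _ => le_of_lt
  filter_upwards [eventually_abs_cesaro_lt hclose (half_lt_self hε)] with n hn
  rw [Real.dist_eq, QfN, QfN, ← mul_sub, ← sum_sub_distrib]
  exact hn.le

end DiscreteTime

section ContinuousTime

variable {X : Type*} [MeasurableSpace X] {P : ℝ → X → Measure X} {f : X → ℝ} {C : ℝ}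

theorem IsMarkovSemigroupR.abs_PfR_le (hP : IsMarkovSemigroupR P) (hC : ∀ y, |f y| ≤ C)
    {t : ℝ} (ht : 0 ≤ t) (x : X) : |PfR P t f x| ≤ C :=
  have := hP.1 t x ht
  abs_integral_le_of_forall_abs_le hC

theorem TimeMeasR.stronglyMeasurable_PfR (hT : TimeMeasR P) (hf : StronglyMeasurable f)
    (x : X) : StronglyMeasurable fun t => PfR P t f x :=
  hf.integral_kernel (κ := ⟨fun t => P t x,
    Measure.measurable_of_measurable_coe _ fun A hA => hT x A hA⟩)

theorem IsMarkovSemigroupR.intervalIntegrable_PfR (hP : IsMarkovSemigroupR P)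
    (hT : TimeMeasR P) (hf : StronglyMeasurable f) (hC : ∀ y, |f y| ≤ C) (x : X) {t : ℝ}
    (ht : 0 ≤ t) : IntervalIntegrable (fun r => PfR P r f x) volume 0 t :=
  (intervalIntegrable_iff_integrableOn_Ioc_of_le ht).mpr <|
    Measure.integrableOn_of_bounded measure_Ioc_lt_top.ne
      (hT.stronglyMeasurable_PfR hf x).aestronglyMeasurable
      (ae_restrict_of_forall_mem measurableSet_Ioc fun _ hr => hP.abs_PfR_le hC hr.1.le x)

theorem IsMarkovSemigroupR.abs_QfR_le (hP : IsMarkovSemigroupR P) (hC : ∀ y, |f y| ≤ C)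
    {t : ℝ} (ht : 0 < t) (x : X) : |QfR P t f x| ≤ C := by
  rw [QfR, abs_mul, one_div, abs_of_pos (inv_pos.mpr ht), inv_mul_le_iff₀ ht, ← Real.norm_eq_abs]
  calc ‖∫ r in Set.Ioc 0 t, PfR P r f x‖ ≤ C * volume.real (Set.Ioc 0 t) :=
        norm_setIntegral_le_of_norm_le_const measure_Ioc_lt_top fun r hr =>
          (Real.norm_eq_abs _).trans_le (hP.abs_PfR_le hC hr.1.le x)
    _ = t * C := by simp [ht.le, mul_comm]

theorem EvContR.asymptoticallyEquicontinuousAt_QfR [PseudoMetricSpace X] [BorelSpace X]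
    {z : X} (hz : EvContR P z) (hP : IsMarkovSemigroupR P) (hT : TimeMeasR P)
    (hf : BddLip f) : AsymptoticallyEquicontinuousAt atTop (fun t => QfR P t f) z := by
  intro ε hε
  obtain ⟨⟨K, hK⟩, C, hC⟩ := hf
  have hint (y : X) {t : ℝ} (ht : 0 ≤ t) :=
    hP.intervalIntegrable_PfR hT hK.continuous.stronglyMeasurable hC y ht
  obtain ⟨δ, hδ, hδz⟩ := hz f ⟨⟨K, hK⟩, C, hC⟩ (ε / 3) (by positivity)
  refine Metric.eventually_nhds_iff.mpr ⟨δ, hδ, fun x hx => ?_⟩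
  have hdiff_le : ∀ r ≥ 0, |PfR P r f x - PfR P r f z| ≤ C + C := fun r hr =>
    (abs_sub _ _).trans (add_le_add (hP.abs_PfR_le hC hr x) (hP.abs_PfR_le hC hr z))
  have hbdd : IsBoundedUnder (· ≤ ·) atTop fun r => |PfR P r f x - PfR P r f z| :=
    isBoundedUnder_of_eventually_le ((eventually_ge_atTop 0).mono hdiff_le)
  have hclose : ∀ᶠ r in atTop, |PfR P r f x - PfR P r f z| ≤ ε / 2 :=
    (eventually_lt_of_limsup_lt ((hδz x hx).trans_lt (by linarith)) hbdd).mono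
      fun _ => le_of_lt
  filter_upwards [eventually_abs_average_Ioc_lt (fun t ht => (hint x ht).sub (hint z ht))
    hdiff_le hclose (half_lt_self hε), eventually_gt_atTop 0] with t hlt ht
  rw [Real.dist_eq, QfR, QfR, ← mul_sub, ← integral_sub (hint x ht.le).1 (hint z ht.le).1]
  exact hlt.le

end ContinuousTime

/-- for a Feller, everywhere eventually continuous Markov semigroup, if
`f` is bounded Lipschitz, `D` is countable and dense, `s_n → ∞` in `T`, and
`Q_{s_n} f(x)` converges for every `x ∈ D`, then `Q_{s_n} f` converges pointwise on all
of `X` and the limit function is bounded and continuous; stated for both `T = ℕ₊` and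
`T = [0,∞)`. -/
theorem stmt14 :
    (∀ (X : Type u) [MetricSpace X] [CompleteSpace X] [TopologicalSpace.SeparableSpace X]
        [MeasurableSpace X] [BorelSpace X]
        (P : ℕ → X → Measure X) (f : X → ℝ) (D : Set X) (s : ℕ → ℕ),
      IsMarkovSemigroupN P → FellerN P → (∀ z : X, EvContN P z) →
      BddLip f → D.Countable → Dense D →
      (∀ n, 1 ≤ s n) → Tendsto s atTop atTop →
      (∀ x ∈ D, ∃ L : ℝ, Tendsto (fun n : ℕ => QfN P (s n) f x) atTop (𝓝 L)) →
      ∃ g : X → ℝ, Continuous g ∧ (∃ C, ∀ x, |g x| ≤ C) ∧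
        ∀ x : X, Tendsto (fun n : ℕ => QfN P (s n) f x) atTop (𝓝 (g x))) ∧
    (∀ (X : Type u) [MetricSpace X] [CompleteSpace X] [TopologicalSpace.SeparableSpace X]
        [MeasurableSpace X] [BorelSpace X]
        (P : ℝ → X → Measure X) (f : X → ℝ) (D : Set X) (s : ℕ → ℝ),
      IsMarkovSemigroupR P → FellerR P → TimeMeasR P → (∀ z : X, EvContR P z) →
      BddLip f → D.Countable → Dense D →
      (∀ n, 0 ≤ s n) → Tendsto s atTop atTop →
      (∀ x ∈ D, ∃ L : ℝ, Tendsto (fun n : ℕ => QfR P (s n) f x) atTop (𝓝 L)) →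
      ∃ g : X → ℝ, Continuous g ∧ (∃ C, ∀ x, |g x| ≤ C) ∧
        ∀ x : X, Tendsto (fun n : ℕ => QfR P (s n) f x) atTop (𝓝 (g x))) := by
  constructor
  · intro X _ _ _ _ _ P f D s hP _ hEC hf _ hD _ hs hconv
    obtain ⟨C, hC⟩ := hf.2
    refine exists_bounded_continuous_tendsto_of_dense (C := C)
      (fun z => ((hEC z).asymptoticallyEquicontinuousAt_QfN hP hf).comp_tendsto hs)
      (fun x => ?_) hD hconv
    filter_upwards [hs.eventually (eventually_ge_atTop 1)] with n hn
    exact hP.abs_QfN_le hC hn x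
  · intro X _ _ _ _ _ P f D s hP _ hT hEC hf _ hD _ hs hconv
    obtain ⟨C, hC⟩ := hf.2
    refine exists_bounded_continuous_tendsto_of_dense (C := C)
      (fun z => ((hEC z).asymptoticallyEquicontinuousAt_QfR hP hT hf).comp_tendsto hs)
      (fun x => ?_) hD hconv
    filter_upwards [hs.eventually (eventually_gt_atTop 0)] with n hn
    exact hP.abs_QfR_le hC hn x
end
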